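/- arXiv:1805.08100 — 2 statements merged into one kernel-verified Lean document; each statement's English description precedes it below -/
import Mathlib

section
/- Let X be a real Hilbert space, ξ ∈ X, W a closed subspace with orthogonal projection Π_W, and a, b ∈ ℝ^J with L := ‖ξ‖, L_W := ‖Π_W ξ‖. Suppose componentwise |a_j − b_j| ≤ δ for all j, and suppose ‖b‖₂ = L_W (i.e., b is the vector of exact reduced quadratures). If L + L_W > 0, then |‖a‖₂ − L| ≤ √J δ + ‖Π_{W⊥} ξ‖² / (L + L_W). -/
/-! A componentwise error of at most `δ` costs at most `√J δ` in the Euclidean norm, and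
`‖ξ‖ - ‖Π_W ξ‖ = (‖ξ‖² - ‖Π_W ξ‖²) / (‖ξ‖ + ‖Π_W ξ‖) = ‖Π_{W⊥} ξ‖² / (‖ξ‖ + ‖Π_W ξ‖)` by Pythagoras;
the triangle inequality through the exact reduced quadrature vector `b` combines the two. -/

theorem EuclideanSpace.norm_le_sqrt_card_mul {ι : Type*} [Fintype ι] (x : EuclideanSpace ℝ ι)
    {δ : ℝ} (hx : ∀ i, |x i| ≤ δ) : ‖x‖ ≤ √(Fintype.card ι) * δ := by
  rcases isEmpty_or_nonempty ι with _ | ⟨⟨i₀⟩⟩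
  · simp [Subsingleton.elim x 0]
  have hδ : 0 ≤ δ := (abs_nonneg _).trans (hx i₀)
  calc ‖x‖ = √(∑ i, ‖x i‖ ^ 2) := EuclideanSpace.norm_eq x
    _ ≤ √(∑ _ : ι, δ ^ 2) := by
      gcongr with i
      exact (Real.norm_eq_abs _).trans_le (hx i)
    _ = √(Fintype.card ι) * δ := by
      rw [Finset.sum_const, Finset.card_univ, nsmul_eq_mul, Real.sqrt_mul (Nat.cast_nonneg _),
        Real.sqrt_sq hδ]

-- At `a = b = 0` both sides vanish, the right one because `0 / 0 = 0`.
theorem sub_eq_sq_sub_sq_div_add {a b : ℝ} (ha : 0 ≤ a) (hb : 0 ≤ b) :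
    a - b = (a ^ 2 - b ^ 2) / (a + b) := by
  rcases (add_nonneg ha hb).eq_or_lt with h | h
  · obtain ⟨rfl, rfl⟩ : a = 0 ∧ b = 0 := ⟨by linarith, by linarith⟩
    simp
  · rw [eq_div_iff h.ne']
    ring

theorem Submodule.norm_sub_norm_orthogonalProjectionOnto {𝕜 E : Type*} [RCLike 𝕜]
    [NormedAddCommGroup E] [InnerProductSpace 𝕜 E] (K : Submodule 𝕜 E)
    [K.HasOrthogonalProjection] (x : E) :
    ‖x‖ - ‖(K.orthogonalProjectionOnto x : E)‖ =
      ‖(Kᗮ.orthogonalProjectionOnto x : E)‖ ^ 2 / (‖x‖ + ‖(K.orthogonalProjectionOnto x : E)‖) := by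
  rw [sub_eq_sq_sub_sq_div_add (norm_nonneg _) (norm_nonneg _),
    K.norm_sq_eq_add_norm_sq_projection x, Submodule.coe_norm, Submodule.coe_norm,
    add_sub_cancel_left]

theorem stmt_3_general {X : Type*} [NormedAddCommGroup X] [InnerProductSpace ℝ X]
    (W : Submodule ℝ X) [CompleteSpace W] (ξ : X)
    {J : ℕ} (a b : EuclideanSpace ℝ (Fin J)) (δ : ℝ)
    (hab : ∀ j, |a j - b j| ≤ δ)
    (hb : ‖b‖ = ‖(Submodule.orthogonalProjectionOnto W ξ : X)‖) :
    |‖a‖ - ‖ξ‖| ≤ Real.sqrt J * δ +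
      ‖(Submodule.orthogonalProjectionOnto Wᗮ ξ : X)‖ ^ 2 /
        (‖ξ‖ + ‖(Submodule.orthogonalProjectionOnto W ξ : X)‖) := by
  have hproj := W.norm_sub_norm_orthogonalProjectionOnto ξ
  have hb_le : ‖b‖ ≤ ‖ξ‖ := by
    rw [hb, ← sub_nonneg, hproj]
    positivity
  have hdist : ‖a - b‖ ≤ Real.sqrt J * δ := by
    simpa using EuclideanSpace.norm_le_sqrt_card_mul (a - b) hab
  calc |‖a‖ - ‖ξ‖| ≤ |‖a‖ - ‖b‖| + |‖b‖ - ‖ξ‖| := abs_sub_le _ _ _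
    _ ≤ ‖a - b‖ + (‖ξ‖ - ‖b‖) := by
      rw [abs_sub_comm ‖b‖, abs_of_nonneg (sub_nonneg.mpr hb_le)]
      gcongr
      exact abs_norm_sub_norm_le a b
    _ ≤ Real.sqrt J * δ + (‖ξ‖ - ‖b‖) := by gcongr
    _ = _ := by rw [hb, hproj]

theorem stmt_3 {X : Type*} [NormedAddCommGroup X] [InnerProductSpace ℝ X]
    [CompleteSpace X] (W : Submodule ℝ X) [CompleteSpace W] (ξ : X)
    {J : ℕ} (a b : EuclideanSpace ℝ (Fin J)) (δ : ℝ) (hδ : 0 ≤ δ)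
    (hab : ∀ j, |a j - b j| ≤ δ)
    (hb : ‖b‖ = ‖(Submodule.orthogonalProjectionOnto W ξ : X)‖)
    (hpos : 0 < ‖ξ‖ + ‖(Submodule.orthogonalProjectionOnto W ξ : X)‖) :
    |‖a‖ - ‖ξ‖| ≤ Real.sqrt J * δ +
      ‖(Submodule.orthogonalProjectionOnto Wᗮ ξ : X)‖ ^ 2 /
        (‖ξ‖ + ‖(Submodule.orthogonalProjectionOnto W ξ : X)‖) :=
  stmt_3_general W ξ a b δ hab hb
end

section
/- Let G, G_M ∈ ℝ^{K×n}, ρ^hf ∈ ℝ^n, y = G ρ^hf. Assume: (i) ‖(G − G_M) ρ^hf‖∞ ≤ δ_ati; (ii) every entry of G − G_M has absolute value at most ε; (iii) rank(G_M) ≤ N with factorization G_M = A B, B(:,I) = Id_N for some index set I of size N. Define ρ̂ supported on I with ρ̂(I) = B ρ^hf, and set C = ‖B ρ^hf‖₁. Then ‖G ρ̂ − y‖∞ ≤ δ_ati + C ε, and ρ̂ has at most N nonzero entries. Hence any minimizer of ‖ρ‖₀ subject to ‖Gρ − y‖∞ ≤ δ_ati + C ε has at most N nonzero entries. -/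
open Matrix

theorem stmt_13 {K n N : ℕ} (G GM : Matrix (Fin K) (Fin n) ℝ)
    (ρhf : Fin n → ℝ) (δati ε : ℝ)
    (h1 : ∀ k, |((G - GM) *ᵥ ρhf) k| ≤ δati)
    (h2 : ∀ k i, |G k i - GM k i| ≤ ε)
    (A : Matrix (Fin K) (Fin N) ℝ) (B : Matrix (Fin N) (Fin n) ℝ)
    (ι : Fin N → Fin n) (hι : Function.Injective ι)
    (hfac : GM = A * B) (hB : B.submatrix id ι = 1)
    (ρhat : Fin n → ℝ)
    (hsupp : ∀ i : Fin n, (∀ m : Fin N, ι m ≠ i) → ρhat i = 0)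
    (hval : ∀ m : Fin N, ρhat (ι m) = (B *ᵥ ρhf) m) :
    (∀ k, |(G *ᵥ ρhat) k - (G *ᵥ ρhf) k| ≤
      δati + (∑ m, |(B *ᵥ ρhf) m|) * ε) ∧
    (Finset.univ.filter fun i => ρhat i ≠ 0).card ≤ N ∧
    (∀ ρ : Fin n → ℝ,
      (∀ k, |(G *ᵥ ρ) k - (G *ᵥ ρhf) k| ≤
        δati + (∑ m, |(B *ᵥ ρhf) m|) * ε) →
      (∀ σ : Fin n → ℝ,
        (∀ k, |(G *ᵥ σ) k - (G *ᵥ ρhf) k| ≤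
          δati + (∑ m, |(B *ᵥ ρhf) m|) * ε) →
        (Finset.univ.filter fun i => ρ i ≠ 0).card ≤
          (Finset.univ.filter fun i => σ i ≠ 0).card) →
      (Finset.univ.filter fun i => ρ i ≠ 0).card ≤ N) := by
  have hoff : ∀ (f : Fin n → ℝ) i, i ∈ Finset.univ → i ∉ Finset.univ.image ι →
      f i * ρhat i = 0 := by
    intro f i _ hi
    have : ∀ m, ι m ≠ i := fun m hm =>
      hi (Finset.mem_image.mpr ⟨m, Finset.mem_univ _, hm⟩)
    rw [hsupp i this, mul_zero]
  have hsum_aux : ∀ (f : Fin n → ℝ),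
      ∑ i, f i * ρhat i = ∑ m, f (ι m) * ρhat (ι m) := by
    intro f
    rw [← Finset.sum_subset (Finset.subset_univ (Finset.univ.image ι)) (hoff f),
      Finset.sum_image (fun x _ y _ h => hι h)]
  -- B *ᵥ ρhat = B *ᵥ ρhf
  have hBρ : B *ᵥ ρhat = B *ᵥ ρhf := by
    funext m
    have : (B *ᵥ ρhat) m = ∑ m', B m (ι m') * ρhat (ι m') := hsum_aux (B m)
    rw [this]
    have h1' : ∀ m', B m (ι m') = (1 : Matrix (Fin N) (Fin N) ℝ) m m' := by
      intro m'; rw [← hB]; rfl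
    simp only [h1', hval]
    have : ∑ m', (1 : Matrix (Fin N) (Fin N) ℝ) m m' * (B *ᵥ ρhf) m'
        = ((1 : Matrix (Fin N) (Fin N) ℝ) *ᵥ (B *ᵥ ρhf)) m := rfl
    rw [this, one_mulVec]
  have hGM : GM *ᵥ ρhat = GM *ᵥ ρhf := by
    rw [hfac, ← mulVec_mulVec, ← mulVec_mulVec, hBρ]
  have hsumabs : ∑ i, |ρhat i| = ∑ m, |(B *ᵥ ρhf) m| := by
    have := hsum_aux (fun i => if ρhat i < 0 then -1 else 1)
    have habs : ∀ x : ℝ, (if x < 0 then (-1:ℝ) else 1) * x = |x| := by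
      intro x
      rcases lt_or_ge x 0 with h | h
      · simp [h, abs_of_neg h]
      · simp [not_lt.mpr h, abs_of_nonneg h]
    calc ∑ i, |ρhat i| = ∑ i, (if ρhat i < 0 then (-1:ℝ) else 1) * ρhat i := by
          simp only [habs]
      _ = ∑ m, (if ρhat (ι m) < 0 then (-1:ℝ) else 1) * ρhat (ι m) := this
      _ = ∑ m, |ρhat (ι m)| := by simp only [habs]
      _ = ∑ m, |(B *ᵥ ρhf) m| := by simp only [hval]
  have part1 : ∀ k, |(G *ᵥ ρhat) k - (G *ᵥ ρhf) k| ≤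
      δati + (∑ m, |(B *ᵥ ρhf) m|) * ε := by
    intro k
    have key : (G *ᵥ ρhat) k - (G *ᵥ ρhf) k
        = ((G - GM) *ᵥ ρhat) k - ((G - GM) *ᵥ ρhf) k := by
      simp only [sub_mulVec, Pi.sub_apply]
      rw [hGM]
      ring
    rw [key]
    have hb1 : |((G - GM) *ᵥ ρhat) k| ≤ (∑ m, |(B *ᵥ ρhf) m|) * ε := by
      rw [← hsumabs]
      calc |((G - GM) *ᵥ ρhat) k| = |∑ i, (G - GM) k i * ρhat i| := rfl
        _ ≤ ∑ i, |(G - GM) k i * ρhat i| := Finset.abs_sum_le_sum_abs _ _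
        _ ≤ ∑ i, |ρhat i| * ε := by
            apply Finset.sum_le_sum
            intro i _
            rw [abs_mul, mul_comm]
            exact mul_le_mul_of_nonneg_left (by simpa using h2 k i) (abs_nonneg _)
        _ = (∑ i, |ρhat i|) * ε := by rw [Finset.sum_mul]
    calc |((G - GM) *ᵥ ρhat) k - ((G - GM) *ᵥ ρhf) k|
        ≤ |((G - GM) *ᵥ ρhat) k| + |((G - GM) *ᵥ ρhf) k| := abs_sub _ _
      _ ≤ (∑ m, |(B *ᵥ ρhf) m|) * ε + δati := add_le_add hb1 (h1 k)
      _ = δati + (∑ m, |(B *ᵥ ρhf) m|) * ε := by ring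
  have part2 : (Finset.univ.filter fun i => ρhat i ≠ 0).card ≤ N := by
    have hsub : (Finset.univ.filter fun i => ρhat i ≠ 0) ⊆ Finset.univ.image ι := by
      intro i hi
      rw [Finset.mem_filter] at hi
      by_contra h
      exact hi.2 (hsupp i fun m hm => h (Finset.mem_image.mpr ⟨m, Finset.mem_univ _, hm⟩))
    calc (Finset.univ.filter fun i => ρhat i ≠ 0).card
        ≤ (Finset.univ.image ι).card := Finset.card_le_card hsub
      _ = N := by rw [Finset.card_image_of_injective _ hι, Finset.card_univ, Fintype.card_fin]
  refine ⟨part1, part2, fun ρ hρ hmin => ?_⟩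
  exact le_trans (hmin ρhat part1) part2
end
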